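/- Let q be a prime power with q ≡ 7 or 13 (mod 24), set M = 3 and N = (q²+q+1)/3, and let I_1 be the set of indices i ∈ Z_N with ψ_{F_{q³}}(C_i^{(N,q³)}) = −3+2q. Then X_1 is purely a subset of Z_{2N}; that is, reduction modulo 2N is injective on {x ∈ X_Q : x mod N ∈ 2^{-1}I_1}. -/

import Mathlib

/-!
Every element of `𝒳_Q` has the form `ω ^ d * c` with `d ∈ W_Q` and `c ∈ F_q^×`, and `F_q^×` is
generated by `ω ^ (3 * N)`, so its logarithm is `d` modulo `N`. Suppose two distinct elements had
logarithms congruent modulo `2 * N`: their indices `d ≠ d'` then agree modulo `N`. Frobenius sends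
`ω ^ e` to `θ ^ e * ω ^ e` with `θ = ω ^ (q - 1)` of order `3 * N`, and the two vanishing traces
`Tr ω ^ (2 * d) = Tr ω ^ (2 * d') = 0` force `θ ^ d = ε`, `θ ^ d' = ε ^ 2` for a primitive cube root
of unity `ε`. The product of the two elements is a square, since the logarithms have the same
parity, and it equals `-(ω ^ (d + d') * Tr ω ^ d₀) ^ 2 / 2`, or `6 * ω ^ (2 * (d₀ + d))` when one of
them is `2 * ω ^ d₀`. So `-2` or `6` would be a square in `F_{q³}`, which fails as
`q ^ 3 ≡ 7, 13 (mod 24)`.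
-/

open scoped Classical Pointwise

/-- The canonical additive character of a finite field `F` of characteristic `p`:
`ψ(x) = exp(2πi·Tr_{F/F_p}(x)/p)`. -/
noncomputable def canonPsi (p : ℕ) (F : Type) [Field F] [Algebra (ZMod p) F] : F → ℂ :=
  fun x => Complex.exp (2 * Real.pi * Complex.I *
    ((Algebra.trace (ZMod p) F x).val : ℂ) / (p : ℂ))

/-- The cyclotomic class `C_i^{(N,Q)} = ω^i · ⟨ω^N⟩`. -/
def cycClass {F : Type} [Field F] (ω : F) (N i : ℕ) : Set F :=
  {x | ∃ k : ℕ, x = ω ^ i * (ω ^ N) ^ k}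

/-- `ψ(D) = Σ_{x ∈ D} ψ(x)` for a subset `D` of a finite field. -/
noncomputable def psiSum {F : Type} [Field F] [Fintype F] (ψ : F → ℂ) (S : Set F) : ℂ :=
  ∑ x ∈ S.toFinset, ψ x

/-- `W_Q := {i mod q²+q+1 : Tr_{q³/q}(ω^{2i}) = 0}`. -/
def WQ (q : ℕ) (K : Type) {F : Type} [Field K] [Field F] [Algebra K F] (ω : F) :
    Set (ZMod (q ^ 2 + q + 1)) :=
  {i | Algebra.trace K F (ω ^ (2 * i.val)) = 0}

/-- `𝒳_Q := {ω^{d}·Tr_{q³/q}(ω^{d₀+d}) : d ∈ W_Q, d ≠ d₀} ∪ {2ω^{d₀}}`. -/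
noncomputable def scrXQ (q : ℕ) (K : Type) {F : Type} [Field K] [Field F] [Algebra K F]
    (ω : F) (d₀ : ZMod (q ^ 2 + q + 1)) : Set F :=
  {x | ∃ d ∈ WQ q K ω, d ≠ d₀ ∧
    x = ω ^ d.val * algebraMap K F (Algebra.trace K F (ω ^ (d₀.val + d.val)))} ∪
  {2 * ω ^ d₀.val}

/-- `X_Q := {log_ω(x) mod 2(q²+q+1) : x ∈ 𝒳_Q}`. -/
noncomputable def XQ (q : ℕ) (K : Type) {F : Type} [Field K] [Field F] [Algebra K F]
    (ω : F) (d₀ : ZMod (q ^ 2 + q + 1)) : Set (ZMod (2 * (q ^ 2 + q + 1))) :=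
  {y | ∃ x ∈ scrXQ q K ω d₀, ∃ k : ℕ, x = ω ^ k ∧ y = (k : ZMod (2 * (q ^ 2 + q + 1)))}

theorem IsPrimitiveRoot.pow_eq_pow_iff_modEq {M : Type*} [CommMonoid M] {ζ : M} {k : ℕ}
    (h : IsPrimitiveRoot ζ k) (hk : k ≠ 0) {i j : ℕ} : ζ ^ i = ζ ^ j ↔ i ≡ j [MOD k] := by
  rw [h.eq_orderOf]
  exact (h.isOfFinOrder hk).pow_eq_pow_iff_modEq

theorem pow_eq_self_of_pow_eq_one {M : Type*} [Monoid M] {ε : M} {n q : ℕ} (h : ε ^ n = 1)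
    (hq : q % n = 1) : ε ^ q = ε := by
  rw [← Nat.div_add_mod q n, pow_add, pow_mul, h, one_pow, one_mul, hq, pow_one]

theorem pow_pow_eq_pow_pred_pow_mul {M : Type*} [CommMonoid M] (ω : M) (e : ℕ) {q : ℕ}
    (hq : q ≠ 0) : (ω ^ e) ^ q = (ω ^ (q - 1)) ^ e * ω ^ e := by
  rw [← pow_mul, ← pow_mul, ← pow_add]
  congr 1
  obtain ⟨r, rfl⟩ := Nat.exists_eq_add_one_of_ne_zero hq
  simp only [Nat.add_sub_cancel]
  ring

theorem IsSquare.of_mul_right {F : Type*} [Field F] {a b : F} (hab : IsSquare (a * b))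
    (hb : IsSquare b) (hb0 : b ≠ 0) : IsSquare a := by
  simpa [hb0] using hab.div hb

theorem ne_zero_of_forall_exists_pow_eq {F : Type*} [Field F] [Fintype F] {ω : F}
    (hF : 2 < Fintype.card F) (hω : ∀ x : F, x ≠ 0 → ∃ k : ℕ, ω ^ k = x) : ω ≠ 0 := by
  rintro rfl
  have hone : ∀ x : F, x ≠ 0 → x = 1 := by
    intro x hx
    obtain ⟨k, rfl⟩ := hω x hx
    rcases k with _ | k
    · exact pow_zero _
    · simp at hx
  obtain ⟨a, b, c, hab, hac, hbc⟩ := Fintype.two_lt_card_iff.1 hF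
  by_cases ha : a = 0
  · exact hbc ((hone b (ha ▸ hab.symm)).trans (hone c (ha ▸ hac.symm)).symm)
  · by_cases hb : b = 0
    · exact hac ((hone a ha).trans (hone c (hb ▸ hbc.symm)).symm)
    · exact hab ((hone a ha).trans (hone b hb).symm)

theorem isPrimitiveRoot_of_forall_exists_pow_eq {F : Type*} [Field F] [Fintype F] {ω : F}
    (hω0 : ω ≠ 0) (hω : ∀ x : F, x ≠ 0 → ∃ k : ℕ, ω ^ k = x) :
    IsPrimitiveRoot ω (Fintype.card F - 1) := by
  rw [← Units.val_mk0 hω0, IsPrimitiveRoot.coe_units_iff, IsPrimitiveRoot.iff_orderOf,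
    orderOf_eq_card_of_forall_mem_zpowers, Nat.card_eq_fintype_card, Fintype.card_units]
  intro x
  obtain ⟨k, hk⟩ := hω x x.ne_zero
  exact ⟨k, Units.ext (by simp [hk])⟩

theorem FiniteField.not_isSquare_six {F : Type*} [Field F] [Fintype F]
    (hF : Fintype.card F % 24 = 7 ∨ Fintype.card F % 24 = 13) : ¬ IsSquare (6 : F) := by
  classical
  obtain ⟨n, -, hcard⟩ := FiniteField.card F (ringChar F)
  have h2 : ringChar F ≠ 2 := by
    intro h
    have := FiniteField.even_card_of_char_two h
    omega
  have h3 : ringChar F ≠ 3 := by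
    intro h
    have : 3 ∣ Fintype.card F := by
      rw [hcard, h]
      exact dvd_pow_self 3 n.ne_zero
    omega
  have hcast : ∀ m : ℕ, (Fintype.card F : ZMod m) = ((Fintype.card F % m : ℕ) : ZMod m) :=
    fun m => (ZMod.natCast_mod _ m).symm
  rw [← quadraticChar_neg_one_iff_not_isSquare, show (6 : F) = 2 * ((3 : ℕ) : F) by norm_num,
    map_mul, quadraticChar_two h2, quadraticChar_odd_prime h2 (by norm_num) h3, hcast 8, hcast 4,
    hcast 3]
  rcases hF with h | h
  · rw [show Fintype.card F % 8 = 7 by omega, show Fintype.card F % 4 = 3 by omega,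
      show Fintype.card F % 3 = 1 by omega]
    decide
  · rw [show Fintype.card F % 8 = 5 by omega, show Fintype.card F % 4 = 1 by omega,
      show Fintype.card F % 3 = 1 by omega]
    decide

theorem modEq_of_pow_eq_pow_mul_algebraMap {K F : Type*} [Field K] [Field F] [Fintype K]
    [Algebra K F] {q : ℕ} (hK : Fintype.card K = q) {ω : F} {L : ℕ}
    (hω : IsPrimitiveRoot ω (L * (q - 1))) (hL : L ≠ 0) {k e : ℕ} {c : K}
    (h : ω ^ k = ω ^ e * algebraMap K F c) : k ≡ e [MOD L] := by
  have hq : q - 1 ≠ 0 := by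
    have : 1 < q := hK ▸ Fintype.one_lt_card
    omega
  have hω0 : ω ≠ 0 := hω.ne_zero (mul_ne_zero hL hq)
  have hc : c ≠ 0 := by
    rintro rfl
    simp [hω0] at h
  have hpow : ω ^ (k * (q - 1)) = ω ^ (e * (q - 1)) := by
    rw [pow_mul, h, mul_pow, ← map_pow, ← hK, FiniteField.pow_card_sub_one_eq_one c hc, map_one,
      mul_one, pow_mul]
  exact Nat.ModEq.mul_right_cancel' hq ((hω.pow_eq_pow_iff_modEq (mul_ne_zero hL hq)).1 hpow)

section

variable {K F : Type*} [Field K] [Field F] [Fintype K] [Fintype F] [Algebra K F] {q N : ℕ}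

theorem finrank_eq_three (hK : Fintype.card K = q) (hF : Fintype.card F = q ^ 3) :
    Module.finrank K F = 3 := by
  have hq : 1 < q := hK ▸ Fintype.one_lt_card
  rw [Module.card_eq_pow_finrank (K := K) (V := F), hK] at hF
  exact Nat.pow_right_injective hq hF

theorem algebraMap_trace_eq_add_pow (hK : Fintype.card K = q) (h3 : Module.finrank K F = 3)
    (x : F) : algebraMap K F (Algebra.trace K F x) = x + x ^ q + (x ^ q) ^ q := by
  rw [FiniteField.algebraMap_trace_eq_sum_pow, h3, Nat.card_eq_fintype_card, hK]
  simp [Finset.sum_range_succ, ← pow_mul, sq]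

theorem algebraMap_trace_eq_three_mul (hK : Fintype.card K = q) (h3 : Module.finrank K F = 3)
    {z : F} (hz : z ^ q = z) : algebraMap K F (Algebra.trace K F z) = 3 * z := by
  rw [algebraMap_trace_eq_add_pow hK h3, hz, hz]
  ring

theorem pow_eq_mul_of_trace_eq_zero (hK : Fintype.card K = q) (h3 : Module.finrank K F = 3)
    {y η ε : F} (hε : IsPrimitiveRoot ε 3) (hεq : ε ^ q = ε) (hη : η ^ q = ε * η) (hη0 : η ≠ 0)
    (hy : Algebra.trace K F y = 0) (hyη : Algebra.trace K F (y * η) = 0) : y ^ q = ε * y := by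
  have h1 := algebraMap_trace_eq_add_pow hK h3 y
  have h2 := algebraMap_trace_eq_add_pow hK h3 (y * η)
  rw [hy, map_zero] at h1
  rw [hyη, map_zero, mul_pow, hη, mul_pow, mul_pow, hεq, hη] at h2
  have htwist : y + ε * y ^ q + ε ^ 2 * (y ^ q) ^ q = 0 := by
    refine (mul_eq_zero.1 (?_ : (y + ε * y ^ q + ε ^ 2 * (y ^ q) ^ q) * η = 0)).resolve_right hη0
    linear_combination -h2
  have hsum : 1 + ε + ε ^ 2 = 0 := by
    simpa [Finset.sum_range_succ] using hε.geom_sum_eq_zero (by norm_num)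
  have hne : ε - ε ^ 2 ≠ 0 := by
    rw [show ε - ε ^ 2 = ε * (1 - ε) by ring]
    exact mul_ne_zero (hε.ne_zero (by norm_num)) (sub_ne_zero.2 (hε.ne_one (by norm_num)).symm)
  have h : (ε - ε ^ 2) * (y ^ q - ε * y) = 0 := by
    linear_combination htwist + ε ^ 2 * h1 + (ε - 1) * y * hsum
  exact sub_eq_zero.1 ((mul_eq_zero.1 h).resolve_left hne)

theorem modEq_of_trace_pow_eq_zero (hK : Fintype.card K = q) (h3 : Module.finrank K F = 3)
    (hq : q % 3 = 1) (hN : Odd N) {ω : F} (hω0 : ω ≠ 0)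
    (hθ : IsPrimitiveRoot (ω ^ (q - 1)) (3 * N)) {d s : ℕ} (hs : ¬ 3 ∣ s)
    (hd : Algebra.trace K F (ω ^ (2 * d)) = 0)
    (hds : Algebra.trace K F (ω ^ (2 * (d + N * s))) = 0) : d ≡ N * s [MOD 3 * N] := by
  have hq0 : q ≠ 0 := by omega
  have h3N : 3 * N ≠ 0 := by have := hN.pos; omega
  have hcop : Nat.Coprime (2 * s) 3 :=
    Nat.Coprime.mul_left (by norm_num) ((Nat.Prime.coprime_iff_not_dvd Nat.prime_three).2 hs).symm
  have hε : IsPrimitiveRoot ((ω ^ (q - 1)) ^ (N * (2 * s))) 3 := by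
    rw [pow_mul]
    exact (hθ.pow (by omega) (mul_comm 3 N)).pow_of_coprime _ hcop
  have hη : (ω ^ (2 * (N * s))) ^ q = (ω ^ (q - 1)) ^ (N * (2 * s)) * ω ^ (2 * (N * s)) := by
    rw [pow_pow_eq_pow_pred_pow_mul _ _ hq0, mul_left_comm 2 N s]
  have hfrob := pow_eq_mul_of_trace_eq_zero hK h3 hε (pow_eq_self_of_pow_eq_one hε.pow_eq_one hq)
    hη (pow_ne_zero _ hω0) hd (by rwa [← pow_add, ← mul_add])
  rw [pow_pow_eq_pow_pred_pow_mul _ _ hq0] at hfrob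
  have h2 := (hθ.pow_eq_pow_iff_modEq h3N).1 (mul_right_cancel₀ (pow_ne_zero _ hω0) hfrob)
  rw [mul_left_comm] at h2
  exact Nat.ModEq.cancel_left_of_coprime
    (Nat.Coprime.mul_left (by norm_num) (Nat.coprime_two_right.2 hN)) h2

theorem exists_isPrimitiveRoot_of_trace_pow_eq_zero (hK : Fintype.card K = q)
    (h3 : Module.finrank K F = 3) (hq : q % 3 = 1) (hN : Odd N) {ω : F} (hω0 : ω ≠ 0)
    (hθ : IsPrimitiveRoot (ω ^ (q - 1)) (3 * N)) {d d' : ℕ}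
    (hd : Algebra.trace K F (ω ^ (2 * d)) = 0) (hd' : Algebra.trace K F (ω ^ (2 * d')) = 0)
    (hmodN : d ≡ d' [MOD N]) (hmod3N : ¬ d ≡ d' [MOD 3 * N]) :
    ∃ ε : F, IsPrimitiveRoot ε 3 ∧ (ω ^ d) ^ q = ε * ω ^ d ∧ (ω ^ d') ^ q = ε ^ 2 * ω ^ d' := by
  wlog hle : d ≤ d' generalizing d d'
  · obtain ⟨ε, hε, h₁, h₂⟩ :=
      this hd' hd hmodN.symm (fun h => hmod3N h.symm) (le_of_not_ge hle)
    refine ⟨ε ^ 2, hε.pow_of_coprime 2 (by norm_num), h₂, ?_⟩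
    rw [h₁, ← pow_mul, show 2 * 2 = 3 + 1 from rfl, pow_succ, hε.pow_eq_one, one_mul]
  have hq0 : q ≠ 0 := by omega
  have h3N : 3 * N ≠ 0 := by have := hN.pos; omega
  obtain ⟨s, hs⟩ := (Nat.modEq_iff_dvd' hle).1 hmodN
  obtain rfl : d' = d + N * s := by rw [← hs, Nat.add_sub_cancel' hle]
  have hs3 : ¬ 3 ∣ s := by
    rintro ⟨t, rfl⟩
    exact hmod3N ((Nat.modEq_iff_dvd' hle).2 ⟨t, by rw [Nat.add_sub_cancel_left]; ring⟩)
  have hθd := (hθ.pow_eq_pow_iff_modEq h3N).2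
    (modEq_of_trace_pow_eq_zero hK h3 hq hN hω0 hθ hs3 hd hd')
  refine ⟨(ω ^ (q - 1)) ^ (N * s), ?_, ?_, ?_⟩
  · rw [pow_mul]
    exact (hθ.pow (by omega) (mul_comm 3 N)).pow_of_coprime s
      ((Nat.Prime.coprime_iff_not_dvd Nat.prime_three).2 hs3).symm
  · rw [pow_pow_eq_pow_pred_pow_mul _ _ hq0, hθd]
  · rw [pow_pow_eq_pow_pred_pow_mul _ _ hq0, pow_add, hθd, sq]

theorem neg_two_mul_trace_mul_trace (hK : Fintype.card K = q) (h3 : Module.finrank K F = 3)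
    {a b u ε : F} (hε : IsPrimitiveRoot ε 3) (hεq : ε ^ q = ε) (ha : a ^ q = ε * a)
    (hb : b ^ q = ε ^ 2 * b) (hu : Algebra.trace K F (u ^ 2) = 0) :
    -2 * (a * algebraMap K F (Algebra.trace K F (u * a))) *
        (b * algebraMap K F (Algebra.trace K F (u * b))) =
      (a * b * algebraMap K F (Algebra.trace K F u)) ^ 2 := by
  have hS := algebraMap_trace_eq_add_pow hK h3 (u ^ 2)
  rw [hu, map_zero, pow_right_comm u 2 q, pow_right_comm (u ^ q) 2 q] at hS
  have hH : 1 + ε + ε ^ 2 = 0 := by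
    simpa [Finset.sum_range_succ] using hε.geom_sum_eq_zero (by norm_num)
  have hε2q : (ε ^ 2) ^ q = ε ^ 2 := by rw [pow_right_comm, hεq]
  simp only [algebraMap_trace_eq_add_pow hK h3, mul_pow, ha, hb, hεq, hε2q]
  set u₁ := u ^ q
  set u₂ := u₁ ^ q
  -- modulo `1 + ε + ε ^ 2`, `(u + ε u₁ + ε² u₂) (u + ε² u₁ + ε u₂) = Σ u² - (u u₁ + u u₂ + u₁ u₂)`
  linear_combination (3 * a ^ 2 * b ^ 2) * hS + (-2 * a ^ 2 * b ^ 2 *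
    ((ε - 1) * u₁ ^ 2 + (ε - 1) * (ε ^ 3 + 1) * u₂ ^ 2 + u * u₁ + (ε ^ 2 - ε + 1) * u * u₂ +
      (ε ^ 3 - ε + 1) * u₁ * u₂)) * hH

theorem isSquare_neg_two_of_pow_eq (hK : Fintype.card K = q) (h3 : Module.finrank K F = 3)
    {ω a b u ε : F} (hω0 : ω ≠ 0) (hε : IsPrimitiveRoot ε 3) (hεq : ε ^ q = ε)
    (ha : a ^ q = ε * a) (hb : b ^ q = ε ^ 2 * b) (hu : Algebra.trace K F (u ^ 2) = 0)
    {k k' : ℕ} (hk : Even (k + k')) (hx : ω ^ k = a * algebraMap K F (Algebra.trace K F (u * a)))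
    (hx' : ω ^ k' = b * algebraMap K F (Algebra.trace K F (u * b))) : IsSquare (-2 : F) := by
  have h := neg_two_mul_trace_mul_trace hK h3 hε hεq ha hb hu
  rw [← hx, ← hx', mul_assoc, ← pow_add] at h
  exact IsSquare.of_mul_right ⟨_, h.trans (sq _)⟩ (hk.isSquare_pow ω) (pow_ne_zero _ hω0)

theorem isSquare_six_of_pow_eq (hK : Fintype.card K = q) (h3 : Module.finrank K F = 3)
    {ω a b α β : F} (hω0 : ω ≠ 0) (hαβ : α * β = 1) (ha : a ^ q = α * a) (hb : b ^ q = β * b)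
    {k k' : ℕ} (hk : Even (k + k')) (hx : ω ^ k = 2 * a)
    (hx' : ω ^ k' = b * algebraMap K F (Algebra.trace K F (a * b))) : IsSquare (6 : F) := by
  have hab : (a * b) ^ q = a * b := by
    rw [mul_pow, ha, hb]
    linear_combination a * b * hαβ
  have h : 6 * (a * b) ^ 2 = ω ^ (k + k') := by
    rw [pow_add, hx, hx', algebraMap_trace_eq_three_mul hK h3 hab]
    ring
  have h0 : (a * b) ^ 2 ≠ 0 := by
    intro h0
    rw [h0, mul_zero] at h
    exact pow_ne_zero _ hω0 h.symm
  exact IsSquare.of_mul_right (h ▸ hk.isSquare_pow ω) (IsSquare.sq _) h0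

end

theorem modEq_of_val_natCast_eq {m n k k' : ℕ} (hmn : m ∣ n)
    (h : (((k : ZMod n).val : ℕ) : ZMod m) = (((k' : ZMod n).val : ℕ) : ZMod m)) :
    k ≡ k' [MOD m] := by
  rw [ZMod.val_natCast, ZMod.val_natCast, ZMod.natCast_eq_natCast_iff] at h
  exact ((Nat.mod_modEq k n).symm.of_dvd hmn).trans (h.trans ((Nat.mod_modEq k' n).of_dvd hmn))

theorem three_mul_sq_add_add_one_div_three {q : ℕ} (hq : q % 3 = 1) :
    3 * ((q ^ 2 + q + 1) / 3) = q ^ 2 + q + 1 := by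
  obtain ⟨t, rfl⟩ : ∃ t, q = 3 * t + 1 := ⟨q / 3, by omega⟩
  rw [show (3 * t + 1) ^ 2 + (3 * t + 1) + 1 = 3 * (3 * t ^ 2 + 3 * t + 1) by ring]
  omega

theorem odd_sq_add_add_one_div_three {q : ℕ} (hq : q % 3 = 1) : Odd ((q ^ 2 + q + 1) / 3) := by
  have hodd : Odd (q ^ 2 + q + 1) := by
    rw [sq, ← Nat.mul_succ]
    exact (Nat.even_mul_succ_self q).add_one
  rw [← three_mul_sq_add_add_one_div_three hq] at hodd
  exact (Nat.odd_mul.1 hodd).2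

theorem pow_three_mod_24 {q : ℕ} (hq : q % 24 = 7 ∨ q % 24 = 13) :
    q ^ 3 % 24 = 7 ∨ q ^ 3 % 24 = 13 := by
  rw [Nat.pow_mod]
  rcases hq with h | h <;> simp [h]

theorem exists_isPrimitiveRoot_of_mem_WQ {K F : Type} [Field K] [Field F] [Fintype K]
    [Fintype F] [Algebra K F] {q N : ℕ} (hK : Fintype.card K = q) (h3 : Module.finrank K F = 3)
    (hq : q % 3 = 1) (hN : Odd N) (h3N : q ^ 2 + q + 1 = 3 * N) {ω : F}
    (hω : IsPrimitiveRoot ω (3 * N * (q - 1))) {d d' : ZMod (q ^ 2 + q + 1)} (hd : d ∈ WQ q K ω)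
    (hd' : d' ∈ WQ q K ω) (hne : d ≠ d') (hmod : d.val ≡ d'.val [MOD N]) :
    ∃ ε : F, IsPrimitiveRoot ε 3 ∧ (ω ^ d.val) ^ q = ε * ω ^ d.val ∧
      (ω ^ d'.val) ^ q = ε ^ 2 * ω ^ d'.val := by
  have hq1 : q - 1 ≠ 0 := by
    have : 1 < q := hK ▸ Fintype.one_lt_card
    omega
  have h3N0 : 3 * N ≠ 0 := by have := hN.pos; omega
  refine exists_isPrimitiveRoot_of_trace_pow_eq_zero hK h3 hq hN
    (hω.ne_zero (mul_ne_zero h3N0 hq1)) (hω.pow (by positivity) (mul_comm _ _)) hd hd' hmod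
    fun hmod3N => hne ?_
  rw [← h3N] at hmod3N
  exact ZMod.val_injective _ (hmod3N.eq_of_lt_of_lt (ZMod.val_lt d) (ZMod.val_lt d'))

theorem pow_eq_pow_of_mem_scrXQ {K F : Type} [Field K] [Field F] [Fintype K] [Fintype F]
    [Algebra K F] {q N : ℕ} (hK : Fintype.card K = q) (h3 : Module.finrank K F = 3)
    (hF : Fintype.card F % 24 = 7 ∨ Fintype.card F % 24 = 13) (hq : q % 3 = 1) (hN : Odd N)
    (h3N : q ^ 2 + q + 1 = 3 * N) {ω : F} (hω : IsPrimitiveRoot ω (3 * N * (q - 1)))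
    {d₀ : ZMod (q ^ 2 + q + 1)} (hd₀ : d₀ ∈ WQ q K ω) {k k' : ℕ}
    (hx : ω ^ k ∈ scrXQ q K ω d₀) (hx' : ω ^ k' ∈ scrXQ q K ω d₀) (hkk : k ≡ k' [MOD 2 * N]) :
    ω ^ k = ω ^ k' := by
  have h3N0 : 3 * N ≠ 0 := by have := hN.pos; omega
  have hq1 : q - 1 ≠ 0 := by
    have : 1 < q := hK ▸ Fintype.one_lt_card
    omega
  have hω0 : ω ≠ 0 := hω.ne_zero (mul_ne_zero h3N0 hq1)
  have hlog {k : ℕ} {d : ZMod (q ^ 2 + q + 1)} {c : K}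
      (h : ω ^ k = ω ^ d.val * algebraMap K F c) : k ≡ d.val [MOD N] :=
    (modEq_of_pow_eq_pow_mul_algebraMap hK hω h3N0 h).of_mul_left 3
  have hcollide {d d' : ZMod (q ^ 2 + q + 1)} {c c' : K} (hd : d ∈ WQ q K ω)
      (hd' : d' ∈ WQ q K ω) (hne : d ≠ d') (h : ω ^ k = ω ^ d.val * algebraMap K F c)
      (h' : ω ^ k' = ω ^ d'.val * algebraMap K F c') :=
    exists_isPrimitiveRoot_of_mem_WQ hK h3 hq hN h3N hω hd hd' hne
      ((hlog h).symm.trans ((hkk.of_mul_left 2).trans (hlog h')))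
  have hspecial : 2 * ω ^ d₀.val = ω ^ d₀.val * algebraMap K F 2 := by rw [map_ofNat, mul_comm]
  have heven : Even (k + k') := by
    rw [Nat.even_add, Nat.even_iff, Nat.even_iff, hkk.of_mul_right N]
  have hεε {ε : F} (hε : IsPrimitiveRoot ε 3) : ε * ε ^ 2 = 1 := by
    rw [← pow_succ', hε.pow_eq_one]
  have hneg2 : ¬ IsSquare (-2 : F) := by
    rw [FiniteField.isSquare_neg_two_iff]
    omega
  by_contra hne
  rcases hx with ⟨d, hd, hdd₀, hx⟩ | hx <;> rcases hx' with ⟨d', hd', hd'd₀, hx'⟩ | hx'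
  · obtain ⟨ε, hε, ha, hb⟩ := hcollide hd hd' (by rintro rfl; exact hne (hx.trans hx'.symm)) hx hx'
    rw [pow_add] at hx hx'
    have hu : Algebra.trace K F ((ω ^ d₀.val) ^ 2) = 0 := by rwa [← pow_mul, mul_comm]
    exact hneg2 (isSquare_neg_two_of_pow_eq hK h3 hω0 hε
      (pow_eq_self_of_pow_eq_one hε.pow_eq_one hq) ha hb hu heven hx hx')
  · rw [Set.mem_singleton_iff] at hx'
    obtain ⟨ε, hε, hb, ha⟩ := hcollide hd hd₀ hdd₀ hx (hx'.trans hspecial)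
    rw [pow_add] at hx
    exact FiniteField.not_isSquare_six hF
      (isSquare_six_of_pow_eq hK h3 hω0 ((mul_comm _ _).trans (hεε hε)) ha hb
        (add_comm k k' ▸ heven) hx' hx)
  · rw [Set.mem_singleton_iff] at hx
    obtain ⟨ε, hε, ha, hb⟩ := hcollide hd₀ hd' hd'd₀.symm (hx.trans hspecial) hx'
    rw [pow_add] at hx'
    exact FiniteField.not_isSquare_six hF
      (isSquare_six_of_pow_eq hK h3 hω0 (hεε hε) ha hb heven hx hx')
  · exact hne (hx.trans hx'.symm)

theorem stmt14_general (q N : ℕ)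
    (hq24 : q % 24 = 7 ∨ q % 24 = 13) (hN : N = (q ^ 2 + q + 1) / 3)
    (K F : Type) [Field K] [Field F] [Fintype K] [Fintype F]
    [Algebra K F]
    (hK : Fintype.card K = q) (hF : Fintype.card F = q ^ 3)
    (ω : F) (hω : ∀ x : F, x ≠ 0 → ∃ k : ℕ, ω ^ k = x)
    (d₀ : ZMod (q ^ 2 + q + 1)) (hd₀ : d₀ ∈ WQ q K ω)
    (I₁ : Set (ZMod N)) :
    Set.InjOn (fun x : ZMod (2 * (q ^ 2 + q + 1)) => ((x.val : ZMod (2 * N))))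
      {x ∈ XQ q K ω d₀ | ((x.val : ZMod N)) ∈ (2 : ZMod N)⁻¹ • I₁} := by
  have hq3 : q % 3 = 1 := by omega
  have h3N : q ^ 2 + q + 1 = 3 * N := hN ▸ (three_mul_sq_add_add_one_div_three hq3).symm
  have hω0 := ne_zero_of_forall_exists_pow_eq (by rw [hF]; nlinarith [show 7 ≤ q by omega]) hω
  have hprim : IsPrimitiveRoot ω (3 * N * (q - 1)) := by
    have hcard : Fintype.card F - 1 = 3 * N * (q - 1) := by
      obtain ⟨r, rfl⟩ : ∃ r, q = r + 1 := ⟨q - 1, by omega⟩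
      rw [hF, ← h3N, Nat.add_sub_cancel,
        show (r + 1) ^ 3 = ((r + 1) ^ 2 + (r + 1) + 1) * r + 1 by ring, Nat.add_sub_cancel]
    exact hcard ▸ isPrimitiveRoot_of_forall_exists_pow_eq hω0 hω
  have hdvd : 2 * (q ^ 2 + q + 1) ∣ 3 * N * (q - 1) := by
    rw [h3N, mul_comm 2]
    exact mul_dvd_mul_left _ ⟨(q - 1) / 2, by omega⟩
  rintro _ ⟨⟨_, hx₁, k₁, rfl, rfl⟩, -⟩ _ ⟨⟨_, hx₂, k₂, rfl, rfl⟩, -⟩ h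
  have hkk : k₁ ≡ k₂ [MOD 2 * N] := modEq_of_val_natCast_eq (by rw [h3N]; exact ⟨3, by ring⟩) h
  have hpow := pow_eq_pow_of_mem_scrXQ hK (finrank_eq_three hK hF) (hF ▸ pow_three_mod_24 hq24)
    hq3 (hN ▸ odd_sq_add_add_one_div_three hq3) h3N hprim hd₀ hx₁ hx₂ hkk
  have hpos : 3 * N * (q - 1) ≠ 0 := by
    rw [← h3N]
    exact mul_ne_zero (by positivity) (by omega)
  exact (ZMod.natCast_eq_natCast_iff _ _ _).2
    (((hprim.pow_eq_pow_iff_modEq hpos).1 hpow).of_dvd hdvd)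

/-- Let `q ≡ 7` or `13 (mod 24)` be a prime power, `M = 3`,
`N = (q²+q+1)/3`, and let `I₁` be the set of indices `i ∈ Z_N` with
`ψ_{F_{q³}}(C_i^{(N,q³)}) = -3+2q`.  Then `X₁` is purely a subset of `Z_{2N}`; that is,
reduction modulo `2N` is injective on `{x ∈ X_Q : x mod N ∈ 2⁻¹I₁}`. -/
theorem stmt14 (p n q N : ℕ) [Fact p.Prime] (hq : q = p ^ n) (hn : 0 < n)
    (hq24 : q % 24 = 7 ∨ q % 24 = 13) (hN : N = (q ^ 2 + q + 1) / 3)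
    (K F : Type) [Field K] [Field F] [Fintype K] [Fintype F]
    [Algebra K F] [Algebra (ZMod p) F]
    (hK : Fintype.card K = q) (hF : Fintype.card F = q ^ 3)
    (ω : F) (hω : ∀ x : F, x ≠ 0 → ∃ k : ℕ, ω ^ k = x)
    (d₀ : ZMod (q ^ 2 + q + 1)) (hd₀ : d₀ ∈ WQ q K ω)
    (I₁ : Set (ZMod N))
    (hI₁ : I₁ = {i : ZMod N |
      psiSum (canonPsi p F) (cycClass ω N i.val) = -3 + 2 * (q : ℂ)}) :
    Set.InjOn (fun x : ZMod (2 * (q ^ 2 + q + 1)) => ((x.val : ZMod (2 * N))))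
      {x ∈ XQ q K ω d₀ | ((x.val : ZMod N)) ∈ (2 : ZMod N)⁻¹ • I₁} :=
  stmt14_general q N hq24 hN K F hK hF ω hω d₀ hd₀ I₁
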